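/- Let V : ℝ² → ℝ be a C² harmonic function, and suppose there exists a constant b ∈ ℝ such that V(q) ≥ -b·|q|² for all q ∈ ℝ². Then every maximal solution q : I → ℝ² of the ODE q̈(t) = -∇V(q(t)) is defined on all of ℝ (i.e., the system admits global solutions for all initial data). -/

import Mathlib

open Set

noncomputable section

/-- The Euclidean plane. -/
abbrev E2 := EuclideanSpace ℝ (Fin 2)

/-- A function `V : ℝ² → ℝ` is harmonic if its Laplacian (the sum of its
second partial derivatives) vanishes identically. -/
def Harmonic2 (V : E2 → ℝ) : Prop :=
  ∀ p : E2, ∑ i : Fin 2,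
    fderiv ℝ (fun q => fderiv ℝ V q (EuclideanSpace.single i 1)) p
      (EuclideanSpace.single i 1) = 0

/-- `q` (with velocity `v`) solves the second-order ODE `q̈(t) = F (t, q(t))`
on the set `s`. -/
def SolOn (F : ℝ → E2 → E2) (q v : ℝ → E2) (s : Set ℝ) : Prop :=
  ∀ t ∈ s, HasDerivAt q (v t) t ∧ HasDerivAt v (F t (q t)) t

/-- `q` (with velocity `v`) is a maximal solution of `q̈(t) = F (t, q(t))` on
the open interval `s`: it solves the ODE there and admits no extension to a
strictly larger open interval. -/
def IsMaximalSolution (F : ℝ → E2 → E2) (q v : ℝ → E2) (s : Set ℝ) : Prop :=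
  IsOpen s ∧ s.OrdConnected ∧ s.Nonempty ∧ SolOn F q v s ∧
  ∀ (s' : Set ℝ) (q' v' : ℝ → E2), IsOpen s' → s'.OrdConnected → s ⊆ s' →
    SolOn F q' v' s' → (∀ t ∈ s, q' t = q t ∧ v' t = v t) → s' = s

/-!
Along a solution of `q̈ = -∇V(q)` the energy `‖q̇‖²/2 + V(q)` is conserved, so the lower bound
`V ≥ -b‖q‖²` gives `‖q̇‖ ≤ K‖q‖ + ε`, and Grönwall's inequality bounds `q`, hence `q̇`, on every
bounded time interval. A solution of the `C¹` first-order system `(q, q̇)' = (q̇, -∇V(q))` that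
stays bounded as `t ↑ T` extends beyond `T`, because Picard–Lindelöf gives a lifespan that is
uniform over initial data in a ball. Hence a maximal interval of existence is not bounded above,
and by time reversal `t ↦ -t` it is not bounded below either.
-/

open Filter Topology Pointwise

section FirstOrder

variable {E : Type*} [NormedAddCommGroup E] [NormedSpace ℝ E] {G : E → E}

theorem ContDiff.eqOn_Icc_of_hasDerivAt (hG : ContDiff ℝ 1 G) {f g : ℝ → E} {a b : ℝ}
    (hf : ∀ t ∈ Icc a b, HasDerivAt f (G (f t)) t)
    (hg : ∀ t ∈ Icc a b, HasDerivAt g (G (g t)) t) (ha : f a = g a) :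
    EqOn f g (Icc a b) := by
  have hfc : ContinuousOn f (Icc a b) := fun t ht => (hf t ht).continuousAt.continuousWithinAt
  have hgc : ContinuousOn g (Icc a b) := fun t ht => (hg t ht).continuousAt.continuousWithinAt
  obtain ⟨K, hK⟩ := LocallyLipschitzOn.exists_lipschitzOnWith_of_compact
    ((isCompact_Icc.image_of_continuousOn hfc).union (isCompact_Icc.image_of_continuousOn hgc))
    hG.locallyLipschitz.locallyLipschitzOn
  exact ODE_solution_unique_of_mem_Icc_right (fun _ _ => hK) hfc
    (fun t ht => (hf t (Ico_subset_Icc_self ht)).hasDerivWithinAt)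
    (fun t ht => Or.inl (mem_image_of_mem f (Ico_subset_Icc_self ht))) hgc
    (fun t ht => (hg t (Ico_subset_Icc_self ht)).hasDerivWithinAt)
    (fun t ht => Or.inr (mem_image_of_mem g (Ico_subset_Icc_self ht))) ha

theorem ContDiff.exists_forall_norm_le_exists_hasDerivAt [ProperSpace E]
    (hG : ContDiff ℝ 1 G) (r : ℝ) :
    ∃ δ > 0, ∀ (t₀ : ℝ) (x : E), ‖x‖ ≤ r →
      ∃ f : ℝ → E, f t₀ = x ∧ ∀ t ∈ Ioo (t₀ - δ) (t₀ + δ), HasDerivAt f (G (f t)) t := by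
  set R := r.toNNReal
  obtain ⟨K, hK⟩ := LocallyLipschitzOn.exists_lipschitzOnWith_of_compact
    (isCompact_closedBall (0 : E) (R + 1 : NNReal)) hG.locallyLipschitz.locallyLipschitzOn
  obtain ⟨M, hM⟩ := (isCompact_closedBall (0 : E) (R + 1 : NNReal)).exists_bound_of_continuousOn
    hG.continuous.continuousOn
  set L := M.toNNReal
  set δ : ℝ := 1 / (L + 1)
  have hδ : 0 < δ := by positivity
  refine ⟨δ, hδ, fun t₀ x hx => ?_⟩
  have ht₀ : t₀ ∈ Icc (t₀ - δ) (t₀ + δ) := ⟨by linarith, by linarith⟩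
  have hPL : IsPicardLindelof (fun _ => G) ⟨t₀, ht₀⟩ 0 (R + 1) R L K := by
    refine IsPicardLindelof.of_time_independent
      (fun y hy => (hM y hy).trans (Real.le_coe_toNNReal M)) hK ?_
    simp only [add_sub_cancel_left, sub_sub_cancel, max_self, NNReal.coe_add, NNReal.coe_one, δ]
    rw [mul_one_div, div_le_one (by positivity)]
    linarith
  obtain ⟨f, hf₀, hf⟩ := hPL.exists_eq_forall_mem_Icc_hasDerivWithinAt
    (x := x) (mem_closedBall_zero_iff.mpr (hx.trans (Real.le_coe_toNNReal r)))
  exact ⟨f, hf₀, fun t ht => (hf t (Ioo_subset_Icc_self ht)).hasDerivAt (Icc_mem_nhds ht.1 ht.2)⟩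

theorem ContDiff.exists_extension_of_eventually_norm_le [ProperSpace E] (hG : ContDiff ℝ 1 G)
    {z : ℝ → E} {a T r : ℝ} (haT : a < T) (hz : ∀ t ∈ Ioo a T, HasDerivAt z (G (z t)) t)
    (hr : ∀ᶠ t in 𝓝[<] T, ‖z t‖ ≤ r) :
    ∃ c ∈ Ioo a T, ∃ d > T, ∃ w : ℝ → E,
      (∀ t ∈ Ioo c d, HasDerivAt w (G (w t)) t) ∧ EqOn w z (Ico c T) := by
  obtain ⟨δ, hδ, hexists⟩ := hG.exists_forall_norm_le_exists_hasDerivAt r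
  obtain ⟨l, hlT, hl⟩ := mem_nhdsLT_iff_exists_Ioo_subset.mp (hr.and (Ioo_mem_nhdsLT haT))
  set c := max ((l + T) / 2) (T - δ / 2)
  have hcδ : T - δ / 2 ≤ c := le_max_right _ _
  have hc : c ∈ Ioo l T := ⟨lt_max_of_lt_left (by linarith [mem_Iio.mp hlT]),
    max_lt (by linarith [mem_Iio.mp hlT]) (by linarith)⟩
  obtain ⟨w, hw₀, hw⟩ := hexists c (z c) (hl hc).1
  refine ⟨c, (hl hc).2, c + δ, by linarith, w, fun t ht => hw t ⟨by linarith [ht.1], ht.2⟩,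
    fun t ht => ?_⟩
  exact hG.eqOn_Icc_of_hasDerivAt (fun u hu => hw u ⟨by linarith [hu.1], by linarith [hu.2, ht.2]⟩)
    (fun u hu => hz u (hl ⟨hc.1.trans_le hu.1, hu.2.trans_lt ht.2⟩).2) hw₀ ⟨ht.1, le_rfl⟩

end FirstOrder

def firstOrderField (f : E2 → E2) (p : E2 × E2) : E2 × E2 := (p.2, f p.1)

theorem ContDiff.firstOrderField {f : E2 → E2} (hf : ContDiff ℝ 1 f) :
    ContDiff ℝ 1 (firstOrderField f) :=
  contDiff_snd.prodMk (hf.comp contDiff_fst)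

theorem solOn_iff_hasDerivAt_firstOrderField {f : E2 → E2} {q v : ℝ → E2} {s : Set ℝ} :
    SolOn (fun _ => f) q v s ↔
      ∀ t ∈ s, HasDerivAt (fun t => (q t, v t)) (firstOrderField f (q t, v t)) t := by
  refine ⟨fun h t ht => (h t ht).1.prodMk (h t ht).2, fun h t ht => ⟨?_, ?_⟩⟩
  · exact (ContinuousLinearMap.fst ℝ E2 E2).hasFDerivAt.comp_hasDerivAt t (h t ht)
  · exact (ContinuousLinearMap.snd ℝ E2 E2).hasFDerivAt.comp_hasDerivAt t (h t ht)

theorem SolOn.mono {F : ℝ → E2 → E2} {q v : ℝ → E2} {s s' : Set ℝ} (h : SolOn F q v s)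
    (hs : s' ⊆ s) : SolOn F q v s' :=
  fun t ht => h t (hs ht)

theorem SolOn.piecewise {F : ℝ → E2 → E2} {q v q' v' : ℝ → E2} {s s' : Set ℝ}
    [DecidablePred (· ∈ s)] (h : SolOn F q v s) (h' : SolOn F q' v' s')
    (hs : IsOpen s) (hs' : IsOpen s') (heq : ∀ t ∈ s ∩ s', q' t = q t ∧ v' t = v t) :
    SolOn F (s.piecewise q q') (s.piecewise v v') (s ∪ s') := by
  intro t ht
  by_cases hts : t ∈ s
  · have hq : s.piecewise q q' =ᶠ[𝓝 t] q :=
      eventuallyEq_of_mem (hs.mem_nhds hts) (piecewise_eqOn ..)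
    have hv : s.piecewise v v' =ᶠ[𝓝 t] v :=
      eventuallyEq_of_mem (hs.mem_nhds hts) (piecewise_eqOn ..)
    rw [hq.eq_of_nhds, hv.eq_of_nhds]
    exact ⟨(h t hts).1.congr_of_eventuallyEq hq, (h t hts).2.congr_of_eventuallyEq hv⟩
  · have hts' : t ∈ s' := ht.resolve_left hts
    have hagree : ∀ u ∈ s', s.piecewise q q' u = q' u ∧ s.piecewise v v' u = v' u := by
      intro u hu
      by_cases hus : u ∈ s
      · simpa [piecewise_eq_of_mem _ _ _ hus] using (heq u ⟨hus, hu⟩).imp Eq.symm Eq.symm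
      · simp [piecewise_eq_of_notMem _ _ _ hus]
    have hq : s.piecewise q q' =ᶠ[𝓝 t] q' :=
      eventuallyEq_of_mem (hs'.mem_nhds hts') fun u hu => (hagree u hu).1
    have hv : s.piecewise v v' =ᶠ[𝓝 t] v' :=
      eventuallyEq_of_mem (hs'.mem_nhds hts') fun u hu => (hagree u hu).2
    rw [hq.eq_of_nhds, hv.eq_of_nhds]
    exact ⟨(h' t hts').1.congr_of_eventuallyEq hq, (h' t hts').2.congr_of_eventuallyEq hv⟩

theorem SolOn.comp_neg {f : E2 → E2} {q v : ℝ → E2} {s : Set ℝ} (h : SolOn (fun _ => f) q v s) :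
    SolOn (fun _ => f) (fun t => q (-t)) (fun t => -v (-t)) (-s) := by
  intro t ht
  obtain ⟨hq, hv⟩ := h (-t) ht
  constructor
  · simpa [Function.comp_def] using hq.scomp t (hasDerivAt_neg t)
  · exact (hv.scomp t (hasDerivAt_neg t)).neg.congr_deriv (by simp)

theorem SolOn.exists_extension_right {f : E2 → E2} (hf : ContDiff ℝ 1 f) {q v : ℝ → E2}
    {a T r : ℝ} (haT : a < T) (h : SolOn (fun _ => f) q v (Ioo a T))
    (hr : ∀ᶠ t in 𝓝[<] T, ‖q t‖ ≤ r ∧ ‖v t‖ ≤ r) :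
    ∃ c ∈ Ioo a T, ∃ d > T, ∃ q' v' : ℝ → E2,
      SolOn (fun _ => f) q' v' (Ioo c d) ∧ ∀ t ∈ Ioo c T, q' t = q t ∧ v' t = v t := by
  obtain ⟨c, hc, d, hd, w, hw, hwz⟩ := hf.firstOrderField.exists_extension_of_eventually_norm_le
    haT (solOn_iff_hasDerivAt_firstOrderField.mp h) (hr.mono fun t ht => norm_prod_le_iff.mpr ht)
  refine ⟨c, hc, d, hd, fun t => (w t).1, fun t => (w t).2,
    solOn_iff_hasDerivAt_firstOrderField.mpr hw, fun t ht => ?_⟩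
  simp [hwz (Ioo_subset_Ico_self ht)]

theorem IsMaximalSolution.comp_neg {f : E2 → E2} {q v : ℝ → E2} {s : Set ℝ}
    (h : IsMaximalSolution (fun _ => f) q v s) :
    IsMaximalSolution (fun _ => f) (fun t => q (-t)) (fun t => -v (-t)) (-s) := by
  obtain ⟨hopen, hconn, hne, hsol, hmax⟩ := h
  refine ⟨hopen.neg, hconn.preimage_anti fun _ _ => neg_le_neg, hne.neg, hsol.comp_neg,
    fun s' q' v' hopen' hconn' hss' hsol' heq => ?_⟩
  have hrev := hmax (-s') (fun t => q' (-t)) (fun t => -v' (-t)) hopen'.neg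
    (hconn'.preimage_anti fun _ _ => neg_le_neg) (neg_subset.mp hss') hsol'.comp_neg
    (fun t ht => by simpa [neg_eq_iff_eq_neg] using heq (-t) (by simpa using ht))
  rw [← hrev, neg_neg]

theorem csSup_notMem_of_isOpen {s : Set ℝ} (hs : IsOpen s) (hbdd : BddAbove s) :
    sSup s ∉ s := fun hmem => by
  obtain ⟨u, hu, hus⟩ := exists_Ico_subset_of_mem_nhds (hs.mem_nhds hmem) (exists_gt _)
  have := le_csSup hbdd (hus ⟨by linarith, by linarith⟩ : (sSup s + u) / 2 ∈ s)
  linarith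

theorem Set.OrdConnected.eq_univ_of_not_bddBelow_of_not_bddAbove {s : Set ℝ}
    (hs : s.OrdConnected) (hbelow : ¬ BddBelow s) (habove : ¬ BddAbove s) : s = univ := by
  refine eq_univ_of_forall fun t => ?_
  obtain ⟨a, ha, hat⟩ := not_bddBelow_iff.mp hbelow t
  obtain ⟨b, hb, htb⟩ := not_bddAbove_iff.mp habove t
  exact hs.out ha hb ⟨hat.le, htb.le⟩

def NoForwardBlowUp (f : E2 → E2) : Prop :=
  ∀ (q v : ℝ → E2) (a T : ℝ), a < T → SolOn (fun _ => f) q v (Ioo a T) →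
    ∃ r, ∀ᶠ t in 𝓝[<] T, ‖q t‖ ≤ r ∧ ‖v t‖ ≤ r

theorem IsMaximalSolution.not_bddAbove {f : E2 → E2} (hf : ContDiff ℝ 1 f)
    (hblow : NoForwardBlowUp f) {q v : ℝ → E2} {s : Set ℝ}
    (h : IsMaximalSolution (fun _ => f) q v s) : ¬ BddAbove s := by
  classical
  obtain ⟨hopen, hconn, ⟨t₀, ht₀⟩, hsol, hmax⟩ := h
  intro hbdd
  set T := sSup s
  have hT : T ∉ s := csSup_notMem_of_isOpen hopen hbdd
  have hsT : s ⊆ Iio T := fun t ht => (le_csSup hbdd ht).lt_of_ne (ne_of_mem_of_not_mem ht hT)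
  have ht₀T : t₀ < T := hsT ht₀
  have hIoo : Ioo t₀ T ⊆ s := fun t ht =>
    let ⟨u, hu, htu⟩ := exists_lt_of_lt_csSup ⟨t₀, ht₀⟩ ht.2
    hconn.out ht₀ hu ⟨ht.1.le, htu.le⟩
  obtain ⟨r, hr⟩ := hblow q v t₀ T ht₀T (hsol.mono hIoo)
  obtain ⟨c, hc, d, hd, q', v', hsol', heq⟩ := (hsol.mono hIoo).exists_extension_right hf ht₀T hr
  have hmid : (c + T) / 2 ∈ s ∩ Ioo c d :=
    ⟨hIoo ⟨by linarith [hc.1], by linarith [hc.2]⟩, by linarith [hc.2], by linarith [hc.2]⟩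
  have hconn' : (s ∪ Ioo c d).OrdConnected := isPreconnected_iff_ordConnected.mp <|
    (isPreconnected_iff_ordConnected.mpr hconn).union _ hmid.1 hmid.2 isPreconnected_Ioo
  have hext := hmax (s ∪ Ioo c d) (s.piecewise q q') (s.piecewise v v') (hopen.union isOpen_Ioo)
    hconn' subset_union_left
    (hsol.piecewise hsol' hopen isOpen_Ioo fun t ht => heq t ⟨ht.2.1, hsT ht.1⟩)
    (fun t ht => by simp [piecewise_eq_of_mem _ _ _ ht])
  exact hT (hext ▸ Or.inr ⟨hc.2, hd⟩)

theorem ContDiff.gradient {F : Type*} [NormedAddCommGroup F] [InnerProductSpace ℝ F]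
    [CompleteSpace F] {V : F → ℝ} {m n : WithTop ℕ∞} (hV : ContDiff ℝ n V) (hmn : m + 1 ≤ n) :
    ContDiff ℝ m (gradient V) :=
  (InnerProductSpace.toDual ℝ F).symm.contDiff.comp (hV.fderiv_right hmn)

def mechanicalEnergy (V : E2 → ℝ) (q v : ℝ → E2) (t : ℝ) : ℝ := ‖v t‖ ^ 2 / 2 + V (q t)

section Energy

variable {V : E2 → ℝ} {q v : ℝ → E2} {s : Set ℝ}

theorem SolOn.hasDerivAt_mechanicalEnergy (hV : Differentiable ℝ V)
    (h : SolOn (fun _ p => -gradient V p) q v s) {t : ℝ} (ht : t ∈ s) :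
    HasDerivAt (mechanicalEnergy V q v) 0 t := by
  obtain ⟨hq, hv⟩ := h t ht
  have hVq : HasDerivAt (fun t => V (q t)) (fderiv ℝ V (q t) (v t)) t :=
    (hV (q t)).hasFDerivAt.comp_hasDerivAt t hq
  refine ((hv.norm_sq.div_const 2).add hVq).congr_deriv ?_
  rw [← inner_gradient_left, inner_neg_right, real_inner_comm]
  ring

theorem SolOn.mechanicalEnergy_eq (hV : Differentiable ℝ V)
    (h : SolOn (fun _ p => -gradient V p) q v s) (hs : IsOpen s) (hs' : IsPreconnected s)
    {t t' : ℝ} (ht : t ∈ s) (ht' : t' ∈ s) :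
    mechanicalEnergy V q v t = mechanicalEnergy V q v t' :=
  hs.is_const_of_deriv_eq_zero hs'
    (fun _ hu => (h.hasDerivAt_mechanicalEnergy hV hu).differentiableAt.differentiableWithinAt)
    (fun _ hu => (h.hasDerivAt_mechanicalEnergy hV hu).deriv) ht ht'

theorem SolOn.norm_le_of_quadratic_lower_bound (hV : Differentiable ℝ V) {b : ℝ}
    (hbound : ∀ p : E2, V p ≥ -b * ‖p‖ ^ 2) (h : SolOn (fun _ p => -gradient V p) q v s)
    (hs : IsOpen s) (hs' : IsPreconnected s) {t₁ : ℝ} (ht₁ : t₁ ∈ s) {t : ℝ} (ht : t ∈ s) :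
    ‖v t‖ ≤ (2 * |b| + 1) * ‖q t‖ + (2 * |mechanicalEnergy V q v t₁| + 1) := by
  set E₁ := mechanicalEnergy V q v t₁
  have hE : ‖v t‖ ^ 2 / 2 + V (q t) = E₁ := h.mechanicalEnergy_eq hV hs hs' ht ht₁
  have hsq : ‖v t‖ ^ 2 ≤ 2 * |b| * ‖q t‖ ^ 2 + 2 * |E₁| := by
    nlinarith [hbound (q t), le_abs_self E₁,
      mul_le_mul_of_nonneg_right (le_abs_self b) (sq_nonneg ‖q t‖)]
  refine le_of_sq_le_sq ?_ (by positivity)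
  nlinarith [mul_nonneg (by positivity : (0 : ℝ) ≤ 4 * |b| ^ 2 + 2 * |b| + 1) (sq_nonneg ‖q t‖),
    mul_nonneg (by positivity : (0 : ℝ) ≤ (2 * |b| + 1) * (2 * |E₁| + 1)) (norm_nonneg (q t)),
    sq_nonneg |E₁|, abs_nonneg E₁]

theorem noForwardBlowUp_neg_gradient (hV : Differentiable ℝ V) {b : ℝ}
    (hbound : ∀ p : E2, V p ≥ -b * ‖p‖ ^ 2) : NoForwardBlowUp (fun p => -gradient V p) := by
  intro q v a T haT h
  have ht₁ : (a + T) / 2 ∈ Ioo a T := ⟨by linarith, by linarith⟩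
  set t₁ := (a + T) / 2
  set K := 2 * |b| + 1
  set ε := 2 * |mechanicalEnergy V q v t₁| + 1
  have hspeed : ∀ t ∈ Ioo a T, ‖v t‖ ≤ K * ‖q t‖ + ε := fun t ht =>
    h.norm_le_of_quadratic_lower_bound hV hbound isOpen_Ioo isPreconnected_Ioo ht₁ ht
  set R := gronwallBound ‖q t₁‖ K ε (T - t₁)
  have hqR : ∀ t ∈ Ico t₁ T, ‖q t‖ ≤ R := by
    intro t ht
    have hsub : Icc t₁ t ⊆ Ioo a T := Icc_subset_Ioo ht₁.1 ht.2
    refine (norm_le_gronwallBound_of_norm_deriv_right_le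
      (fun u hu => (h u (hsub hu)).1.continuousAt.continuousWithinAt)
      (fun u hu => (h u (hsub (Ico_subset_Icc_self hu))).1.hasDerivWithinAt) le_rfl
      (fun u hu => hspeed u (hsub (Ico_subset_Icc_self hu))) t ⟨ht.1, le_rfl⟩).trans ?_
    exact gronwallBound_mono (norm_nonneg _) (by positivity) (by positivity) (by linarith [ht.2])
  refine ⟨K * R + ε, mem_of_superset (Ioo_mem_nhdsLT ht₁.2) fun t ht => ?_⟩
  have hqRt := hqR t (Ioo_subset_Ico_self ht)
  have hRK : R ≤ K * R := le_mul_of_one_le_left ((norm_nonneg _).trans hqRt) (by simp [K])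
  have hε : 0 ≤ ε := by positivity
  have hvt := hspeed t ⟨ht₁.1.trans ht.1, ht.2⟩
  have hKq : K * ‖q t‖ ≤ K * R := by gcongr
  exact ⟨by linarith, by linarith⟩

end Energy

theorem candela_romero_sanchez_general (V : E2 → ℝ) (hC2 : ContDiff ℝ 2 V)
    (b : ℝ) (hbound : ∀ q : E2, V q ≥ -b * ‖q‖ ^ 2) :
    ∀ (q v : ℝ → E2) (s : Set ℝ),
      IsMaximalSolution (fun _ p => -gradient V p) q v s → s = univ := by
  intro q v s hmax
  have hf : ContDiff ℝ 1 (fun p => -gradient V p) := (hC2.gradient (by norm_num)).neg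
  have hblow := noForwardBlowUp_neg_gradient (hC2.differentiable (by norm_num)) hbound
  have habove : ¬ BddAbove s := hmax.not_bddAbove hf hblow
  have hbelow : ¬ BddBelow s := by
    simpa only [bddAbove_neg] using hmax.comp_neg.not_bddAbove hf hblow
  exact hmax.2.1.eq_univ_of_not_bddBelow_of_not_bddAbove hbelow habove

/-- **Candela–Romero–Sánchez (2013).**  If `V : ℝ² → ℝ` is a `C²` harmonic
function bounded below by a negative quadratic, `V q ≥ -b‖q‖²`, then every
maximal solution of `q̈ = -∇V(q)` is defined on all of `ℝ`. -/
theorem candela_romero_sanchez (V : E2 → ℝ) (hC2 : ContDiff ℝ 2 V)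
    (hharm : Harmonic2 V) (b : ℝ) (hbound : ∀ q : E2, V q ≥ -b * ‖q‖ ^ 2) :
    ∀ (q v : ℝ → E2) (s : Set ℝ),
      IsMaximalSolution (fun _ p => -gradient V p) q v s → s = univ :=
  candela_romero_sanchez_general V hC2 b hbound

end
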